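/- Let Γ be a group and let f : Γ → ℂ satisfy f(1) = 0, f(γ) = f(γ⁻¹) and f(γδ) = f(δγ) for all γ, δ ∈ Γ. Then for all a, b, c, d ∈ Γ: 2·f∘ε₄(a,b,c,d) = f∘p(ε₃(a,b,c) ⊗ d) + f∘p(ε₃(b,c,d) ⊗ a) + f∘p(ε₃(a,b,d) ⊗ c) + f∘p(ε₃(c,a,d⁻¹) ⊗ b) − f∘p(ε₂(a,d⁻¹) ⊗ ε₂(b,c)) − f∘p(ε₂(b,d) ⊗ ε₂(c,a)) − f∘p(ε₂(d,c⁻¹) ⊗ ε₂(a,b)), where for u, v ∈ ℂ[Γ], f∘p(u ⊗ v) denotes the value on (u,v) of the bilinear extension of the map (γ,δ) ↦ f(γδ) + f(γδ⁻¹) − 2f(γ) − 2f(δ). -/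

import Mathlib

open MonoidAlgebra

/-- `ε₁(x) = x - 1` in the group algebra `ℂ[Γ]`. -/
noncomputable def eps {Γ : Type*} [Group Γ] (x : Γ) : MonoidAlgebra ℂ Γ :=
  MonoidAlgebra.of ℂ Γ x - 1

/-- The linearization of `f : Γ → ℂ` to a linear functional on the group algebra `ℂ[Γ]`. -/
noncomputable def lin {Γ : Type*} [Group Γ] (f : Γ → ℂ) : MonoidAlgebra ℂ Γ →ₗ[ℂ] ℂ :=
  Finsupp.linearCombination ℂ f ∘ₗ
    (MonoidAlgebra.coeffLinearEquiv ℂ : MonoidAlgebra ℂ Γ ≃ₗ[ℂ] Γ →₀ ℂ).toLinearMap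

/-- `f∘p (u ⊗ v)`: the bilinear extension to `ℂ[Γ] ⊗ ℂ[Γ]` of the map
`(γ, δ) ↦ f(γδ) + f(γδ⁻¹) - 2f(γ) - 2f(δ)`. -/
noncomputable def fp {Γ : Type*} [Group Γ] (f : Γ → ℂ) (u v : MonoidAlgebra ℂ Γ) : ℂ :=
  Finsupp.sum u.coeff fun γ cγ => Finsupp.sum v.coeff fun δ cδ =>
    cγ * cδ * (f (γ * δ) + f (γ * δ⁻¹) - 2 * f γ - 2 * f δ)

lemma lin_of {Γ : Type*} [Group Γ] (f : Γ → ℂ) (x : Γ) : lin f (MonoidAlgebra.of ℂ Γ x) = f x := by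
  show (Finsupp.linearCombination ℂ f) (Finsupp.single x 1) = f x
  rw [Finsupp.linearCombination_single, one_smul]

lemma lin_one {Γ : Type*} [Group Γ] (f : Γ → ℂ) : lin f 1 = f 1 := by
  have : (1 : MonoidAlgebra ℂ Γ) = MonoidAlgebra.of ℂ Γ 1 := rfl
  rw [this, lin_of]

lemma fp_eq {Γ : Type*} [Group Γ] (f : Γ → ℂ) (u v : MonoidAlgebra ℂ Γ) :
    fp f u v = lin (fun γ => lin (fun δ => f (γ*δ) + f (γ*δ⁻¹) - 2*f γ - 2*f δ) v) u := by
  show _ = Finsupp.sum u.coeff _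
  rw [fp]
  apply Finsupp.sum_congr
  intro γ _
  show _ = u.coeff γ • (lin _) v
  rw [smul_eq_mul]
  show _ = u.coeff γ * Finsupp.sum v.coeff _
  rw [Finsupp.mul_sum]
  apply Finsupp.sum_congr
  intro δ _
  show _ = u.coeff γ * (v.coeff δ • _)
  rw [smul_eq_mul]; ring

theorem formula_for_eps4 {Γ : Type*} [Group Γ] (f : Γ → ℂ)
    (h1 : f 1 = 0) (hinv : ∀ γ : Γ, f γ = f γ⁻¹)
    (hconj : ∀ γ δ : Γ, f (γ * δ) = f (δ * γ)) :
    ∀ a b c d : Γ,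
      2 * lin f (eps a * eps b * eps c * eps d) =
        fp f (eps a * eps b * eps c) (MonoidAlgebra.of ℂ Γ d)
        + fp f (eps b * eps c * eps d) (MonoidAlgebra.of ℂ Γ a)
        + fp f (eps a * eps b * eps d) (MonoidAlgebra.of ℂ Γ c)
        + fp f (eps c * eps a * eps d⁻¹) (MonoidAlgebra.of ℂ Γ b)
        - fp f (eps a * eps d⁻¹) (eps b * eps c)
        - fp f (eps b * eps d) (eps c * eps a)
        - fp f (eps d * eps c⁻¹) (eps a * eps b) := by
  intro a b c d
  simp only [fp_eq, eps, sub_mul, mul_sub, mul_one, one_mul, ← map_mul, map_add, map_sub,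
    lin_of, lin_one, h1]
  linear_combination (norm := (simp only [mul_assoc, mul_inv_rev, inv_inv, mul_inv_cancel_left, inv_mul_cancel_left, mul_inv_cancel, inv_mul_cancel, mul_one, one_mul, inv_one, h1]; ring1)) hinv (a * (b * (c * d))) + hconj (d⁻¹ * (c⁻¹ * b⁻¹)) (a⁻¹) - hinv (b * (c * (d * a))) + hinv (a * (b * d)) + hconj (d⁻¹ * b⁻¹) (a⁻¹) - hinv (d * (a * b)) - hconj (b⁻¹) (a⁻¹ * d⁻¹) - hinv (a * (c * d)) - hconj (d⁻¹ * c⁻¹) (a⁻¹) + hinv (c * (d * a)) - hinv (a * d) - hconj (d⁻¹) (a⁻¹) + hinv (d * a) + hinv (b * (c * d)) + hconj (d⁻¹ * c⁻¹) (b⁻¹) - hconj (d⁻¹ * c⁻¹) (b⁻¹) - hinv (b * d) - hconj (d⁻¹) (b⁻¹) + hinv (d * b) - hinv (c * d) - hconj (d⁻¹) (c⁻¹) + hconj (d⁻¹) (c⁻¹) - hinv (d) - hinv (a * (b * (c * d⁻¹))) - hconj (d * (c⁻¹ * b⁻¹)) (a⁻¹) + hconj (d * (c⁻¹ * b⁻¹))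 (a⁻¹) + hinv (a * (b * d⁻¹)) + hconj (d * b⁻¹) (a⁻¹) - hconj (d * b⁻¹) (a⁻¹) + hinv (a * (c * d⁻¹)) + hconj (d * c⁻¹) (a⁻¹) - hconj (d * c⁻¹) (a⁻¹) - hinv (a * d⁻¹) - hconj (d) (a⁻¹) + hconj (d) (a⁻¹) + hinv (b * (c * d⁻¹)) + hconj (d * c⁻¹) (b⁻¹) + hinv (c * (d⁻¹ * b)) - hinv (d⁻¹ * (b * c)) - hconj (c⁻¹) (b⁻¹ * d) - hconj (d * c⁻¹) (b⁻¹) - hinv (b * d⁻¹) - hconj (d) (b⁻¹) + hconj (d) (b⁻¹) - (3:ℂ) * (hinv (c * d⁻¹)) - (3:ℂ) * (hconj (d) (c⁻¹)) + hinv (d⁻¹ * c) + (2:ℂ) * (hconj (d) (c⁻¹)) - hconj (b * (c * d)) (a⁻¹) + hinv (a * (d⁻¹ * (c⁻¹ * b⁻¹))) + hconj (b * (c * d)) (a⁻¹) + hconj (b * c) (a⁻¹) - hinv (a * (c⁻¹ * b⁻¹)) - hconj (b * c) (a⁻¹) - hinv (b * c) - hconj (c⁻¹) (b⁻¹) - hinv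 (c * b) + (2:ℂ) * (hconj (c⁻¹) (b⁻¹)) + hinv (b) + hconj (c * d) (a⁻¹) - hinv (a * (d⁻¹ * c⁻¹)) - hconj (c * d) (a⁻¹) - (2:ℂ) * (hinv (c * a)) + hconj (c⁻¹) (a⁻¹) - hconj (c) (a⁻¹) + hinv (c⁻¹ * a) + (3:ℂ) * (hinv (c)) + hinv (a) - hinv (a * (b * (d * c))) - hconj (c⁻¹ * (d⁻¹ * b⁻¹)) (a⁻¹) + hinv (b * (d * (c * a))) - hinv (a * (b * (d * c⁻¹))) - hconj (c * (d⁻¹ * b⁻¹)) (a⁻¹) + hinv (d * (c⁻¹ * (a * b))) + hconj (b⁻¹) (a⁻¹ * (c * d⁻¹)) + hinv (a * (b * c⁻¹)) + hconj (c * b⁻¹) (a⁻¹) - hinv (c⁻¹ * (a * b)) - hconj (b⁻¹) (a⁻¹ * c) - hinv (a * b) - hconj (b⁻¹) (a⁻¹) + hconj (b⁻¹) (a⁻¹) + hinv (a * (d * c)) + hconj (c⁻¹ * d⁻¹) (a⁻¹) - hinv (d * (c * a)) + hinv (a * (d * c⁻¹)) + hconj (c * d⁻¹) (a⁻¹) -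 hinv (d * (c⁻¹ * a)) - hinv (c * (a * (d⁻¹ * b))) - hconj (b⁻¹ * d) (a⁻¹ * c⁻¹) + hinv (a * (d⁻¹ * (b * c))) + hconj (c⁻¹ * (b⁻¹ * d)) (a⁻¹) - hinv (c * (a * (d⁻¹ * b⁻¹))) - hconj (b * d) (a⁻¹ * c⁻¹) + hconj (b * d) (a⁻¹ * c⁻¹) + (2:ℂ) * (hinv (c * (a * d⁻¹))) + (2:ℂ) * (hconj (d) (a⁻¹ * c⁻¹)) - hinv (a * (d⁻¹ * c)) - hconj (c⁻¹ * d) (a⁻¹) - hconj (d) (a⁻¹ * c⁻¹) + hinv (c * (a * b)) + hconj (b⁻¹) (a⁻¹ * c⁻¹) - hconj (c⁻¹ * b⁻¹) (a⁻¹) + hinv (c * (a * b⁻¹)) + hconj (b) (a⁻¹ * c⁻¹) - hconj (b) (a⁻¹ * c⁻¹) + hconj (c * d⁻¹) (b⁻¹) - hinv (d * (c⁻¹ * b)) - hconj (c) (b⁻¹) + hinv (c⁻¹ * b)
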